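/- arXiv:1812.11223 — 6 statements merged into one kernel-verified Lean document; each statement's English description precedes it below -/
import Mathlib

section
/- If m ≤ N, then the family of permutation operators (fun σ : Equiv.Perm (Fin m) => P_σ), viewed as elements of the space of ℂ-linear endomorphisms of ⨂[ℂ]^m V, is linearly independent over ℂ. -/
/-!
Pick `e₁, …, e_m` in `V` with coordinate functionals `f₁, …, f_m` satisfying `fᵢ(eⱼ) = δᵢⱼ`
(possible because `m ≤ N`). The linear form `T ↦ ⟨f_{τ⁻¹(1)} ⊗ ⋯ ⊗ f_{τ⁻¹(m)}, T(e₁ ⊗ ⋯ ⊗ e_m)⟩`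
on endomorphisms of `V^{⊗m}` sends `P_σ` to `δ_{στ}`, so the `P_σ` are linearly independent.
-/

open scoped TensorProduct

/-- The permutation operator `P_σ` on the `m`-fold tensor power of `V = Fin N → ℂ`,
sending `v₁ ⊗ ⋯ ⊗ v_m` to `v_{σ⁻¹(1)} ⊗ ⋯ ⊗ v_{σ⁻¹(m)}`. -/
noncomputable def permOp (N m : ℕ) (σ : Equiv.Perm (Fin m)) :
    (⨂[ℂ] _ : Fin m, (Fin N → ℂ)) →ₗ[ℂ] ⨂[ℂ] _ : Fin m, (Fin N → ℂ) :=
  (PiTensorProduct.reindex ℂ (fun _ : Fin m => (Fin N → ℂ)) σ).toLinearMap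

open Module PiTensorProduct Equiv

section Biorthogonal

variable {R M ι : Type*} [CommRing R] [AddCommGroup M] [Module R M] [Fintype ι] [DecidableEq ι]
  {e : ι → M} {f : ι → Dual R M}

theorem prod_comp_apply_comp_eq_ite (hfe : ∀ i j, f i (e j) = if i = j then 1 else 0)
    (g h : ι → ι) : ∏ i, f (g i) (e (h i)) = if g = h then 1 else 0 := by
  split_ifs with hgh
  · simp [hgh, hfe]
  · obtain ⟨i, hi⟩ := Function.ne_iff.mp hgh
    exact Finset.prod_eq_zero (Finset.mem_univ i) (by simp [hfe, hi])

theorem dualDistrib_tprod_reindex_tprod (hfe : ∀ i j, f i (e j) = if i = j then 1 else 0)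
    (σ τ : Perm ι) :
    dualDistrib (⨂ₜ[R] i, f (τ.symm i)) (reindex R (fun _ => M) σ (⨂ₜ[R] i, e i)) =
      if σ = τ then 1 else 0 := by
  simp only [reindex_tprod, dualDistrib_apply, prod_comp_apply_comp_eq_ite hfe,
    DFunLike.coe_fn_eq, symm_bijective.injective.eq_iff, eq_comm]

theorem linearIndependent_reindex_of_biorthogonal
    (hfe : ∀ i j, f i (e j) = if i = j then 1 else 0) :
    LinearIndependent R fun σ : Perm ι => (reindex R (fun _ => M) σ).toLinearMap := by
  refine .of_pairwise_dual_eq_zero_one _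
    (fun τ => dualDistrib (⨂ₜ[R] i, f (τ.symm i)) ∘ₗ LinearMap.applyₗ (⨂ₜ[R] i, e i))
    (fun τ σ hτσ => ?_) (fun τ => ?_)
  · simpa [Ne.symm hτσ] using dualDistrib_tprod_reindex_tprod hfe σ τ
  · simpa using dualDistrib_tprod_reindex_tprod hfe τ τ

end Biorthogonal

theorem linearIndependent_permOp_general (N : ℕ) (m : ℕ) (hm : m ≤ N) :
    LinearIndependent ℂ (fun σ : Equiv.Perm (Fin m) => permOp N m σ) := by
  have hfe : ∀ i j : Fin m, LinearMap.proj (R := ℂ) (φ := fun _ : Fin N => ℂ) (Fin.castLE hm i)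
      (Pi.single (Fin.castLE hm j) 1) = if i = j then 1 else 0 := by
    intro i j
    simp [Pi.single_apply, (Fin.castLE_injective hm).eq_iff]
  exact linearIndependent_reindex_of_biorthogonal hfe

/-- For `m ≤ N` the permutation operators on `V^{⊗ m}` are linearly independent over `ℂ`. -/
theorem linearIndependent_permOp (N : ℕ) (hN : 0 < N) (m : ℕ) (hm : m ≤ N) :
    LinearIndependent ℂ (fun σ : Equiv.Perm (Fin m) => permOp N m σ) :=
  linearIndependent_permOp_general N m hm
end

section
/- For every σ ∈ Equiv.Perm (Fin m), the trace of the permutation operator P_σ on ⨂[ℂ]^m V equals (N : ℂ) raised to the number of cycles of σ counting fixed points, i.e. LinearMap.trace ℂ (⨂[ℂ]^m V) P_σ = (N : ℂ) ^ (Multiset.card σ.cycleType + (m - σ.cycleType.sum)). -/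
/-!
In the basis of `⨂[ℂ]^m V` made of tensor products of standard basis vectors, indexed by
colourings `p : Fin m → Fin N`, the operator `P_σ` sends the basis vector of `p` to that of
`p ∘ σ⁻¹`, so its trace is the number of `σ`-invariant colourings. These are the functions
constant on the `SameCycle` classes, which are the cycles of `σ` together with its fixed
points: there are `σ.partition.parts.card` of them.
-/

open scoped TensorProduct

theorem LinearMap.trace_eq_card_fixedPoints_of_apply_basis {R M ι : Type*} [CommRing R]
    [AddCommGroup M] [Module R M] [Fintype ι] (b : Module.Basis ι R M) (e : ι → ι)
    (f : M →ₗ[R] M) (hf : ∀ i, f (b i) = b (e i)) :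
    trace R M f = Nat.card {i // e i = i} := by
  classical
  rw [trace_eq_matrix_trace R b, Matrix.trace, Nat.card_eq_fintype_card, Fintype.card_subtype,
    ← Finset.sum_boole]
  refine Finset.sum_congr rfl fun i _ => ?_
  rw [Matrix.diag_apply, toMatrix_apply, hf, b.repr_self, Finsupp.single_apply]

namespace Equiv.Perm

variable {α β : Type*}

theorem SameCycle.apply_eq_of_comp_eq [Finite α] {σ : Perm α} {f : α → β} (hf : f ∘ σ = f)
    {x y : α} (h : σ.SameCycle x y) : f x = f y := by
  obtain ⟨n, rfl⟩ := h.exists_nat_pow_eq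
  clear h
  induction n with
  | zero => rfl
  | succ n ih => rw [pow_succ', mul_apply, ih]; exact (congrFun hf _).symm

theorem sameCycle_setoid_le_ker_iff [Finite α] (σ : Perm α) {f : α → β} :
    SameCycle.setoid σ ≤ Setoid.ker f ↔ f ∘ σ = f :=
  ⟨fun h => funext fun _ => (h (sameCycle_apply_right.2 SameCycle.rfl)).symm,
    fun hf _ _ => SameCycle.apply_eq_of_comp_eq hf⟩

def compEqSelfEquiv [Finite α] (σ : Perm α) :
    {f : α → β // f ∘ σ = f} ≃ (Quotient (SameCycle.setoid σ) → β) :=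
  (Equiv.subtypeEquivRight fun _ => (sameCycle_setoid_le_ker_iff σ).symm).trans
    (Setoid.liftEquiv _)

variable [Fintype α] [DecidableEq α] (σ : Perm α)

def cycleOrFixedPoint (x : α) : σ.cycleFactorsFinset ⊕ (σ.supportᶜ : Finset α) :=
  if h : x ∈ σ.support then .inl ⟨σ.cycleOf x, cycleOf_mem_cycleFactorsFinset_iff.2 h⟩
  else .inr ⟨x, Finset.mem_compl.2 h⟩

theorem cycleOrFixedPoint_eq_iff {x y : α} :
    σ.cycleOrFixedPoint x = σ.cycleOrFixedPoint y ↔ σ.SameCycle x y := by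
  by_cases hx : x ∈ σ.support <;> by_cases hy : y ∈ σ.support
  · simp [cycleOrFixedPoint, hx, hy, sameCycle_iff_cycleOf_eq_of_mem_support hx hy]
  · simpa [cycleOrFixedPoint, hx, hy] using fun h => hy (h.mem_support_iff.1 hx)
  · simpa [cycleOrFixedPoint, hx, hy] using fun h => hx (h.mem_support_iff.2 hy)
  · have hfix : Function.IsFixedPt σ x := notMem_support.1 hx
    simpa [cycleOrFixedPoint, hx, hy] using
      ⟨fun h => h ▸ SameCycle.rfl, fun h => h.eq_of_left hfix⟩

theorem cycleOrFixedPoint_surjective : Function.Surjective σ.cycleOrFixedPoint := by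
  rintro (⟨c, hc⟩ | ⟨x, hx⟩)
  · obtain ⟨x, hxc⟩ := (mem_cycleFactorsFinset_iff.1 hc).1.nonempty_support
    have hx : x ∈ σ.support := mem_cycleFactorsFinset_support_le hc hxc
    exact ⟨x, by simp [cycleOrFixedPoint, hx, cycle_is_cycleOf hxc hc]⟩
  · exact ⟨x, by simp [cycleOrFixedPoint, Finset.mem_compl.1 hx]⟩

theorem nat_card_quotient_sameCycle :
    Nat.card (Quotient (SameCycle.setoid σ)) = σ.partition.parts.card := by
  have hker : Setoid.ker σ.cycleOrFixedPoint = SameCycle.setoid σ :=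
    Setoid.ext fun _ _ => σ.cycleOrFixedPoint_eq_iff
  rw [← hker,
    Nat.card_congr (Setoid.quotientKerEquivOfSurjective _ σ.cycleOrFixedPoint_surjective),
    Nat.card_sum, Nat.card_eq_fintype_card, Fintype.card_coe, Nat.card_eq_fintype_card,
    Fintype.card_coe, Finset.card_compl, parts_partition, Multiset.card_add,
    Multiset.card_replicate, cycleType_def, Multiset.card_map, Finset.card_val]

theorem nat_card_comp_eq_self :
    Nat.card {f : α → β // f ∘ σ = f} = Nat.card β ^ σ.partition.parts.card := by
  rw [Nat.card_congr σ.compEqSelfEquiv, Nat.card_fun, nat_card_quotient_sameCycle]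

end Equiv.Perm

open PiTensorProduct in
theorem permOp_basis (N m : ℕ) (σ : Equiv.Perm (Fin m)) (p : Fin m → Fin N) :
    permOp N m σ (Basis.piTensorProduct (fun _ => Pi.basisFun ℂ (Fin N)) p) =
      Basis.piTensorProduct (fun _ => Pi.basisFun ℂ (Fin N)) (p ∘ σ.symm) := by
  simp only [Basis.piTensorProduct_apply, permOp, LinearEquiv.coe_coe, reindex_tprod]
  rfl

theorem trace_permOp_general (N : ℕ) (m : ℕ) (σ : Equiv.Perm (Fin m)) :
    LinearMap.trace ℂ (⨂[ℂ] _ : Fin m, (Fin N → ℂ)) (permOp N m σ)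
      = (N : ℂ) ^ (Multiset.card σ.cycleType + (m - σ.cycleType.sum)) := by
  rw [LinearMap.trace_eq_card_fixedPoints_of_apply_basis _ _ _ (permOp_basis N m σ)]
  rw [Nat.card_congr (Equiv.subtypeEquivRight fun p => (σ.comp_symm_eq p p).trans eq_comm),
    σ.nat_card_comp_eq_self, Equiv.Perm.parts_partition, Multiset.card_add,
    Multiset.card_replicate, Equiv.Perm.sum_cycleType]
  simp

/-- The trace of a permutation operator on `V^{⊗ m}` is `N` to the power of the number of
cycles of `σ`, counting fixed points. -/
theorem trace_permOp (N : ℕ) (hN : 0 < N) (m : ℕ) (σ : Equiv.Perm (Fin m)) :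
    LinearMap.trace ℂ (⨂[ℂ] _ : Fin m, (Fin N → ℂ)) (permOp N m σ)
      = (N : ℂ) ^ (Multiset.card σ.cycleType + (m - σ.cycleType.sum)) :=
  trace_permOp_general N m σ
end

section
/- The trace of the antisymmetrizer A_p on ⨂[ℂ]^p V equals the binomial coefficient N choose p, i.e. LinearMap.trace ℂ (⨂[ℂ]^p V) A_p = (Nat.choose N p : ℂ). In particular this trace is 0 when p > N and 1 when p = N. -/
/-!
`P_σ` permutes the basis `e_{g(1)} ⊗ ⋯ ⊗ e_{g(p)}`, `g : Fin p → Fin N`, by `g ↦ g ∘ σ⁻¹`, so its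
trace counts the `g` with `g ∘ σ = g`. Exchanging the sums, `p! · tr A_p` is the sum over `g` of
the signs of the permutations fixing `g`. For injective `g` only `σ = 1` does; otherwise
`g i = g j` for some `i ≠ j` and `σ ↦ σ * swap i j` pairs the stabilizer off into permutations of
opposite signs. Hence `p! · tr A_p` is the number `N! / (N - p)!` of injections `Fin p → Fin N`.
-/

open scoped TensorProduct

/-- The antisymmetrizer `A_p = (p!)⁻¹ ∑_σ sign(σ) P_σ` on `V^{⊗ p}`. -/
noncomputable def antisym (N p : ℕ) :
    (⨂[ℂ] _ : Fin p, (Fin N → ℂ)) →ₗ[ℂ] ⨂[ℂ] _ : Fin p, (Fin N → ℂ) :=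
  (Nat.factorial p : ℂ)⁻¹ •
    ∑ σ : Equiv.Perm (Fin p), ((Equiv.Perm.sign σ : ℤ) : ℂ) • permOp N p σ

open Finset

theorem LinearMap.trace_eq_card_fixed_of_apply_basis {R M ι : Type*} [CommSemiring R]
    [AddCommMonoid M] [Module R M] [Fintype ι] [DecidableEq ι] (b : Module.Basis ι R M)
    (f : M →ₗ[R] M) (e : ι → ι) (hf : ∀ i, f (b i) = b (e i)) :
    LinearMap.trace R M f = #{i | e i = i} := by
  rw [LinearMap.trace_eq_matrix_trace R b, Matrix.trace, ← sum_boole]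
  refine sum_congr rfl fun i _ => ?_
  rw [Matrix.diag_apply, LinearMap.toMatrix_apply, hf, b.repr_self, Finsupp.single_apply]

theorem Equiv.Perm.sum_sign_of_comp_eq_self {α β : Type*} [Fintype α] [DecidableEq α]
    [DecidableEq β] (g : α → β) :
    ∑ σ ∈ ({σ | g ∘ ⇑σ = g} : Finset (Equiv.Perm α)), (Equiv.Perm.sign σ : ℤ) =
      if Function.Injective g then 1 else 0 := by
  split_ifs with hg
  · have stabilizer_eq : ({σ | g ∘ ⇑σ = g} : Finset (Equiv.Perm α)) = {1} := by
      ext σ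
      simp only [mem_filter, mem_univ, true_and, mem_singleton]
      exact ⟨fun h => Equiv.ext fun i => hg (congrFun h i), fun h => h ▸ rfl⟩
    simp [stabilizer_eq]
  · obtain ⟨i, j, hgij, hij⟩ : ∃ i j, g i = g j ∧ i ≠ j := by
      simpa [Function.Injective] using hg
    have hg_swap : g ∘ Equiv.swap i j = g := by
      rw [Equiv.comp_swap_eq_update, hgij, Function.update_eq_self, ← hgij,
        Function.update_eq_self]
    refine sum_involution (fun σ _ => σ * Equiv.swap i j) (fun σ _ => ?_) (fun σ _ _ => ?_)
      (fun σ hσ => ?_) (fun σ _ => ?_)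
    · simp [Equiv.Perm.sign_swap hij]
    · simpa using hij
    · simp only [mem_filter, mem_univ, true_and] at hσ ⊢
      rw [Equiv.Perm.coe_mul, ← Function.comp_assoc, hσ, hg_swap]
    · simp

theorem Equiv.Perm.sum_sign_mul_card_comp_eq_self (α β : Type*) [Fintype α] [DecidableEq α]
    [Fintype β] [DecidableEq β] :
    ∑ σ : Equiv.Perm α, (Equiv.Perm.sign σ : ℤ) * #{g : α → β | g ∘ ⇑σ = g} =
      (Fintype.card β).descFactorial (Fintype.card α) := by
  calc ∑ σ : Equiv.Perm α, (Equiv.Perm.sign σ : ℤ) * #{g : α → β | g ∘ ⇑σ = g}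
      = ∑ g : α → β, ∑ σ ∈ ({σ | g ∘ ⇑σ = g} : Finset (Equiv.Perm α)),
          (Equiv.Perm.sign σ : ℤ) := by
        simp only [natCast_card_filter, mul_sum, mul_ite, mul_one, mul_zero, sum_filter]
        exact sum_comm
    _ = #{g : α → β | Function.Injective g} := by
        simp only [sum_sign_of_comp_eq_self, sum_boole]
    _ = (Fintype.card β).descFactorial (Fintype.card α) := by
        rw [← Fintype.card_subtype, Fintype.card_congr (Equiv.subtypeInjectiveEquivEmbedding α β),
          Fintype.card_embedding_eq]

theorem permOp_piTensorProduct_basis (N p : ℕ) (σ : Equiv.Perm (Fin p)) (g : Fin p → Fin N) :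
    permOp N p σ (Basis.piTensorProduct (fun _ => Pi.basisFun ℂ (Fin N)) g) =
      Basis.piTensorProduct (fun _ => Pi.basisFun ℂ (Fin N)) (g ∘ σ.symm) := by
  simp [permOp, PiTensorProduct.reindex_tprod]

theorem trace_permOp_s10 (N p : ℕ) (σ : Equiv.Perm (Fin p)) :
    LinearMap.trace ℂ _ (permOp N p σ) = #{g : Fin p → Fin N | g ∘ ⇑σ = g} := by
  rw [LinearMap.trace_eq_card_fixed_of_apply_basis _ _ _ (permOp_piTensorProduct_basis N p σ)]
  simp_rw [Equiv.comp_symm_eq, eq_comm]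

theorem trace_antisym_general (N : ℕ) (p : ℕ) :
    LinearMap.trace ℂ (⨂[ℂ] _ : Fin p, (Fin N → ℂ)) (antisym N p)
        = (Nat.choose N p : ℂ) ∧
      (N < p → LinearMap.trace ℂ (⨂[ℂ] _ : Fin p, (Fin N → ℂ)) (antisym N p) = 0) ∧
      (p = N → LinearMap.trace ℂ (⨂[ℂ] _ : Fin p, (Fin N → ℂ)) (antisym N p) = 1) := by
  have main : LinearMap.trace ℂ _ (antisym N p) = (Nat.choose N p : ℂ) := by
    have h := congrArg (Int.cast : ℤ → ℂ)
      (Equiv.Perm.sum_sign_mul_card_comp_eq_self (Fin p) (Fin N))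
    simp only [Fintype.card_fin, Int.cast_sum, Int.cast_mul, Int.cast_natCast,
      Nat.descFactorial_eq_factorial_mul_choose, Nat.cast_mul] at h
    simp only [antisym, map_smul, map_sum, trace_permOp_s10, smul_eq_mul, h]
    field_simp [Nat.factorial_ne_zero]
  refine ⟨main, fun h => ?_, fun h => ?_⟩
  · rw [main, Nat.choose_eq_zero_of_lt h, Nat.cast_zero]
  · rw [main, h, Nat.choose_self, Nat.cast_one]

/-- The trace of the antisymmetrizer on `V^{⊗ p}` is the binomial coefficient `N.choose p`;
in particular it vanishes for `p > N` and equals `1` for `p = N`. -/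
theorem trace_antisym (N : ℕ) (hN : 0 < N) (p : ℕ) :
    LinearMap.trace ℂ (⨂[ℂ] _ : Fin p, (Fin N → ℂ)) (antisym N p)
        = (Nat.choose N p : ℂ) ∧
      (N < p → LinearMap.trace ℂ (⨂[ℂ] _ : Fin p, (Fin N → ℂ)) (antisym N p) = 0) ∧
      (p = N → LinearMap.trace ℂ (⨂[ℂ] _ : Fin p, (Fin N → ℂ)) (antisym N p) = 1) :=
  trace_antisym_general N p
end

section
/- Consider the antisymmetrizer A_N on the N-fold tensor power ⨂[ℂ]^N V (the tensor power whose length equals dim V = N). Then: (i) the range of A_N is a one-dimensional ℂ-subspace of ⨂[ℂ]^N V; and (ii) for every U ∈ SU(N) and every x in the range of A_N, U^{⊗N} x = x. (The totally antisymmetric representation on N quarks is a singlet precisely at threshold N = dim V.) -/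
open scoped TensorProduct

/-- The `m`-fold tensor power `U^{⊗m}` of the linear map given by the matrix `U`. -/
noncomputable def tpowMap (N m : ℕ) (U : Matrix (Fin N) (Fin N) ℂ) :
    (⨂[ℂ] _ : Fin m, (Fin N → ℂ)) →ₗ[ℂ] ⨂[ℂ] _ : Fin m, (Fin N → ℂ) :=
  PiTensorProduct.map fun _ => Matrix.toLin' U

/-!
`v ↦ A_p (v₁ ⊗ ⋯ ⊗ v_p)` is alternating, so for `p = N = dim V` it equals `det v • ω` with
`ω = A_N (e₁ ⊗ ⋯ ⊗ e_N)`. Hence the range of `A_N` is the line through `ω`, which is nonzero since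
its `e₁ ⊗ ⋯ ⊗ e_N`-coefficient is `(N!)⁻¹`. As `U^{⊗N}` commutes with `A_N`, it acts on `ω` by
`det U = 1`.
-/

open PiTensorProduct

theorem AlternatingMap.apply_eq_basis_det_smul {R M P ι : Type*} [CommRing R] [AddCommGroup M]
    [Module R M] [AddCommGroup P] [Module R P] [Fintype ι] [DecidableEq ι]
    (e : Module.Basis ι R M) (f : M [⋀^ι]→ₗ[R] P) (v : ι → M) :
    f v = e.det v • f e := by
  suffices f = e.det.smulRight (f e) from congrArg (· v) this
  refine e.ext_alternating fun w hw => ?_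
  let σ : Equiv.Perm ι := Equiv.ofBijective w (Finite.injective_iff_bijective.1 hw)
  change f (e ∘ σ) = e.det (e ∘ σ) • f e
  simp [AlternatingMap.map_perm, Module.Basis.det_self]

section Antisymmetrizer

variable {N p : ℕ}

lemma antisym_tprod (v : Fin p → Fin N → ℂ) :
    antisym N p (tprod ℂ v) =
      (p.factorial : ℂ)⁻¹ • ∑ σ : Equiv.Perm (Fin p),
        ((Equiv.Perm.sign σ : ℤ) : ℂ) • tprod ℂ (v ∘ σ.symm) := by
  simp only [antisym, LinearMap.smul_apply, LinearMap.sum_apply, permOp, LinearEquiv.coe_coe,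
    reindex_tprod]
  rfl

lemma antisym_tprod_comp_perm (v : Fin p → Fin N → ℂ) (τ : Equiv.Perm (Fin p)) :
    antisym N p (tprod ℂ (v ∘ τ)) =
      ((Equiv.Perm.sign τ : ℤ) : ℂ) • antisym N p (tprod ℂ v) := by
  rw [antisym_tprod, antisym_tprod, smul_comm ((Equiv.Perm.sign τ : ℤ) : ℂ)]
  congr 1
  rw [Finset.smul_sum]
  apply Fintype.sum_equiv (Equiv.mulRight τ⁻¹)
  intro σ
  have hv : (v ∘ τ) ∘ σ.symm = v ∘ (σ * τ⁻¹).symm := by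
    ext i : 1
    simp [Equiv.Perm.mul_def, Equiv.Perm.inv_def]
  rw [Equiv.coe_mulRight, hv, smul_smul]
  congr 1
  rcases Int.units_eq_one_or (Equiv.Perm.sign τ) with h | h <;> simp [h]

lemma antisym_tprod_eq_zero {v : Fin p → Fin N → ℂ} {i j : Fin p} (hv : v i = v j)
    (hij : i ≠ j) : antisym N p (tprod ℂ v) = 0 := by
  have hswap : v ∘ Equiv.swap i j = v := by
    ext k : 1
    rcases eq_or_ne k i with rfl | hki
    · simp [hv]
    rcases eq_or_ne k j with rfl | hkj
    · simp [hv]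
    · simp [Equiv.swap_apply_of_ne_of_ne hki hkj]
  have h := antisym_tprod_comp_perm v (Equiv.swap i j)
  rw [hswap, Equiv.Perm.sign_swap hij] at h
  have h2 : (2 : ℂ) • antisym N p (tprod ℂ v) =
      (1 + (((-1 : ℤˣ) : ℤ) : ℂ)) • antisym N p (tprod ℂ v) := by
    rw [two_smul, add_smul, one_smul, ← h]
  simpa using h2

variable (N p) in
noncomputable def antisymAlternating :
    (Fin N → ℂ) [⋀^Fin p]→ₗ[ℂ] ⨂[ℂ] _ : Fin p, (Fin N → ℂ) :=
  { (antisym N p).compMultilinearMap (tprod ℂ) with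
    map_eq_zero_of_eq' := fun _ _ _ hv hij => antisym_tprod_eq_zero hv hij }

lemma antisymAlternating_apply (v : Fin p → Fin N → ℂ) :
    antisymAlternating N p v = antisym N p (tprod ℂ v) := rfl

lemma range_antisym_eq_span :
    LinearMap.range (antisym N p) = Submodule.span ℂ (Set.range (antisymAlternating N p)) := by
  rw [LinearMap.range_eq_map, ← span_tprod_eq_top, Submodule.map_span, ← Set.range_comp]
  rfl

lemma tpowMap_comp_antisym (U : Matrix (Fin N) (Fin N) ℂ) :
    tpowMap N p U ∘ₗ antisym N p = antisym N p ∘ₗ tpowMap N p U := by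
  ext v
  simp [antisym_tprod, tpowMap, map_tprod, Function.comp_def]

lemma tpowMap_antisymAlternating (U : Matrix (Fin N) (Fin N) ℂ) (v : Fin p → Fin N → ℂ) :
    tpowMap N p U (antisymAlternating N p v) = antisymAlternating N p (Matrix.toLin' U ∘ v) := by
  rw [antisymAlternating_apply, ← LinearMap.comp_apply, tpowMap_comp_antisym]
  simp [tpowMap, map_tprod, antisymAlternating_apply, Function.comp_def]

end Antisymmetrizer

section TopDegree

variable (N : ℕ)

noncomputable def detTensor : ⨂[ℂ] _ : Fin N, (Fin N → ℂ) :=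
  antisymAlternating N N (Pi.basisFun ℂ (Fin N))

lemma antisymAlternating_eq_det_smul (v : Fin N → Fin N → ℂ) :
    antisymAlternating N N v = (Matrix.of v).det • detTensor N := by
  rw [← Pi.basisFun_det_apply, detTensor]
  exact (antisymAlternating N N).apply_eq_basis_det_smul _ v

noncomputable def diagCoeff : (⨂[ℂ] _ : Fin N, (Fin N → ℂ)) →ₗ[ℂ] ℂ :=
  lift ((MultilinearMap.mkPiAlgebra ℂ (Fin N) ℂ).compLinearMap fun i => LinearMap.proj i)

lemma diagCoeff_tprod (v : Fin N → Fin N → ℂ) : diagCoeff N (tprod ℂ v) = ∏ i, v i i := by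
  simp [diagCoeff]

lemma diagCoeff_antisym_tprod (v : Fin N → Fin N → ℂ) :
    diagCoeff N (antisym N N (tprod ℂ v)) = (N.factorial : ℂ)⁻¹ * (Matrix.of v).det := by
  rw [antisym_tprod, Matrix.det_apply', ← Equiv.sum_comp (Equiv.inv (Equiv.Perm (Fin N)))]
  simp only [map_smul, map_sum, diagCoeff_tprod, smul_eq_mul]
  congr 1
  refine Finset.sum_congr rfl fun σ _ => ?_
  simp [Equiv.Perm.inv_def]

lemma detTensor_ne_zero : detTensor N ≠ 0 := by
  intro h
  have := diagCoeff_antisym_tprod N (Pi.basisFun ℂ (Fin N))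
  rw [← Pi.basisFun_det_apply, Module.Basis.det_self, ← antisymAlternating_apply,
    ← detTensor, h, map_zero, mul_one, eq_comm, inv_eq_zero, Nat.cast_eq_zero] at this
  exact N.factorial_ne_zero this

lemma range_antisym_eq_span_detTensor :
    LinearMap.range (antisym N N) = Submodule.span ℂ {detTensor N} := by
  rw [range_antisym_eq_span]
  refine le_antisymm (Submodule.span_le.mpr ?_) (Submodule.span_mono (by simp [detTensor]))
  rintro _ ⟨v, rfl⟩
  rw [antisymAlternating_eq_det_smul]
  exact Submodule.smul_mem _ _ (Submodule.mem_span_singleton_self _)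

lemma tpowMap_detTensor (U : Matrix (Fin N) (Fin N) ℂ) :
    tpowMap N N U (detTensor N) = U.det • detTensor N := by
  rw [detTensor, tpowMap_antisymAlternating, (antisymAlternating N N).apply_eq_basis_det_smul
    (Pi.basisFun ℂ (Fin N)), Module.Basis.det_comp, Module.Basis.det_self, mul_one,
    LinearMap.det_toLin']

end TopDegree

theorem antisym_top_is_singlet_general (N : ℕ) :
    Module.finrank ℂ (LinearMap.range (antisym N N)) = 1 ∧
      ∀ U : Matrix.specialUnitaryGroup (Fin N) ℂ,
        ∀ x ∈ LinearMap.range (antisym N N),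
          tpowMap N N (U : Matrix (Fin N) (Fin N) ℂ) x = x := by
  rw [range_antisym_eq_span_detTensor]
  refine ⟨finrank_span_singleton (detTensor_ne_zero N), fun U x hx => ?_⟩
  obtain ⟨c, rfl⟩ := Submodule.mem_span_singleton.mp hx
  rw [map_smul, tpowMap_detTensor, (Matrix.mem_specialUnitaryGroup_iff.mp U.2).2, one_smul]

/-- At threshold `p = N = dim V`, the totally antisymmetric representation on `N` quarks is a
singlet: the range of `A_N` is one-dimensional and pointwise fixed by `U^{⊗N}` for every
`U ∈ SU(N)`. -/
theorem antisym_top_is_singlet (N : ℕ) (hN : 0 < N) :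
    Module.finrank ℂ (LinearMap.range (antisym N N)) = 1 ∧
      ∀ U : Matrix.specialUnitaryGroup (Fin N) ℂ,
        ∀ x ∈ LinearMap.range (antisym N N),
          tpowMap N N (U : Matrix (Fin N) (Fin N) ℂ) x = x :=
  antisym_top_is_singlet_general N
end

section
/- There exists a ℂ-linear equivalence φ from the (N−1)-st exterior power ⋀[ℂ]^(N-1) V to the dual space Module.Dual ℂ V such that: (i) for every family v : Fin (N-1) → V and every w ∈ V, φ (v₀ ∧ ⋯ ∧ v_{N-2}) w equals the determinant of the N × N complex matrix whose first N−1 columns are v₀, …, v_{N-2} and whose last column is w; and (ii) for every U ∈ SU(N) and every x ∈ ⋀[ℂ]^(N-1) V, φ (exteriorPower.map (N-1) (Matrix.toLin' (U : Matrix (Fin N) (Fin N) ℂ)) x) = (φ x) ∘ₗ Matrix.toLin' ((U⁻¹ : SU(N)) : Matrix (Fin N) (Fin N) ℂ). (The ε-tensor provides an SU(N)-equivariant isomorphism between N−1 antisymmetrized fundamental factors and one antifundamental factor.) -/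
/-- The wedge `v₀ ∧ ⋯ ∧ v_{n-1}` as an element of the `n`-th exterior power `⋀[ℂ]^n M`. -/
noncomputable def wedge {M : Type*} [AddCommGroup M] [Module ℂ M] (n : ℕ) (v : Fin n → M) :
    ⋀[ℂ]^n M :=
  ⟨ExteriorAlgebra.ιMulti ℂ n v, ExteriorAlgebra.ιMulti_range ℂ n (Set.mem_range_self v)⟩

/-!
`φ` is the `ε`-tensor with its last slot left open:
`v₀ ∧ ⋯ ∧ v_{n-1} ↦ (w ↦ det (v₀, …, v_{n-1}, w))`, which is well defined because the
determinant is alternating. A wedge of `n` distinct standard basis vectors is sent to `±` the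
coordinate functional of the missing one, so `φ` is onto; as `⋀ⁿ Kⁿ⁺¹` and the dual of `Kⁿ⁺¹`
both have dimension `n + 1`, it is an isomorphism. Equivariance is the multiplicativity
`det (A v₀, …, A v_{n-1}, A w) = det A · det (v₀, …, v_{n-1}, w)` together with `det U = 1`.
-/

open Matrix Module

namespace ExteriorAlgebra

variable {R M N : Type*} [CommRing R] [AddCommGroup M] [Module R M] [AddCommGroup N] [Module R N]
  {n : ℕ}

lemma exteriorPower_le_comap_map (f : M →ₗ[R] N) :
    ⋀[R]^n M ≤ (⋀[R]^n N).comap (map f).toLinearMap := by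
  rw [← ιMulti_span_fixedDegree, Submodule.span_le]
  rintro _ ⟨v, rfl⟩
  simpa using ιMulti_range R n (Set.mem_range_self (f ∘ v))

lemma restrict_map_eq_exteriorPower_map (f : M →ₗ[R] N)
    (h : ∀ x ∈ ⋀[R]^n M, (map f).toLinearMap x ∈ ⋀[R]^n N) :
    (map f).toLinearMap.restrict h = exteriorPower.map n f := by
  refine exteriorPower.linearMap_ext (AlternatingMap.ext fun v => Subtype.ext ?_)
  simp [Function.comp_def]

end ExteriorAlgebra

namespace Matrix

section CommRing

variable {R : Type*} [CommRing R]

lemma det_of_mulVec {m : Type*} [Fintype m] [DecidableEq m] (A : Matrix m m R) (u : m → m → R) :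
    (of fun k => A *ᵥ u k).det = A.det * (of u).det := by
  have : (of fun k => A *ᵥ u k) = of u * Aᵀ := by
    ext k l
    simp [mul_apply, mulVec, dotProduct, mul_comm]
  rw [this, det_mul, det_transpose, mul_comm]

variable (R) (n : ℕ)

noncomputable def epsilonForm : (Fin (n + 1) → R) [⋀^Fin n]→ₗ[R] Dual R (Fin (n + 1) → R) :=
  { (detRowAlternating : (Fin (n + 1) → R) [⋀^Fin (n + 1)]→ₗ[R] R).toMultilinearMap.curryRight with
    map_eq_zero_of_eq' := fun v i j hv hij => LinearMap.ext fun w =>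
      detRowAlternating.map_eq_zero_of_eq (Fin.snoc v w) (i := i.castSucc) (j := j.castSucc)
        (by simpa) (by simpa) }

variable {R n}

lemma epsilonForm_apply (v : Fin n → Fin (n + 1) → R) (w : Fin (n + 1) → R) :
    epsilonForm R n v w = (of (Fin.snoc v w)).det :=
  rfl

lemma epsilonForm_mulVec (A : Matrix (Fin (n + 1)) (Fin (n + 1)) R)
    (v : Fin n → Fin (n + 1) → R) (w : Fin (n + 1) → R) :
    epsilonForm R n (fun k => A *ᵥ v k) (A *ᵥ w) = A.det * epsilonForm R n v w := by
  rw [epsilonForm_apply, epsilonForm_apply, ← det_of_mulVec]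
  exact congrArg (det ∘ of) (Fin.comp_snoc (A *ᵥ ·) v w).symm

lemma epsilonForm_init_single_perm (σ : Equiv.Perm (Fin (n + 1))) :
    epsilonForm R n (Fin.init fun k => (Pi.single (σ k) 1 : Fin (n + 1) → R)) =
      Equiv.Perm.sign σ • LinearMap.proj (σ (Fin.last n)) := by
  ext j
  obtain ⟨m, rfl⟩ := σ.surjective j
  simp only [LinearMap.coe_comp, Function.comp_apply, LinearMap.coe_single, epsilonForm_apply,
    LinearMap.smul_apply, LinearMap.coe_proj, Function.eval, Pi.single_apply, σ.injective.eq_iff]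
  induction m using Fin.lastCases with
  | last =>
    have hq : (of fun k => (Pi.single (σ k) 1 : Fin (n + 1) → R)) =
        (1 : Matrix _ _ R).submatrix σ id := by
      ext k l
      simp [one_eq_pi_single]
    simp [hq, det_permute, Units.smul_def]
  | cast k =>
    rw [if_neg (Fin.castSucc_ne_last k).symm, smul_zero]
    exact detRowAlternating.map_eq_zero_of_eq (Fin.snoc _ _ : Fin (n + 1) → Fin (n + 1) → R)
      (i := k.castSucc) (j := Fin.last n) (by simp [Fin.init]) (Fin.castSucc_ne_last k)

variable (R n) in
noncomputable def epsilonMap : ⋀[R]^n (Fin (n + 1) → R) →ₗ[R] Dual R (Fin (n + 1) → R) :=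
  exteriorPower.alternatingMapLinearEquiv (epsilonForm R n)

@[simp]
lemma epsilonMap_ιMulti (v : Fin n → Fin (n + 1) → R) :
    epsilonMap R n (exteriorPower.ιMulti R n v) = epsilonForm R n v :=
  exteriorPower.alternatingMapLinearEquiv_apply_ιMulti _ _

lemma proj_mem_range_epsilonMap (i : Fin (n + 1)) :
    LinearMap.proj i ∈ LinearMap.range (epsilonMap R n) := by
  -- `σ` puts `i` in the last slot, the one that is left open
  let σ := Equiv.swap i (Fin.last n)
  have h := epsilonForm_init_single_perm (R := R) σ
  rw [Equiv.swap_apply_right] at h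
  refine ⟨Equiv.Perm.sign σ •
    exteriorPower.ιMulti R n (Fin.init fun k => (Pi.single (σ k) 1 : Fin (n + 1) → R)), ?_⟩
  rw [LinearMap.map_smul_of_tower, epsilonMap_ιMulti, h, smul_smul, Int.units_mul_self, one_smul]

lemma epsilonMap_surjective : Function.Surjective (epsilonMap R n) := by
  let b := (Pi.basisFun R (Fin (n + 1))).dualBasis
  rw [← LinearMap.range_eq_top, eq_top_iff, ← b.span_eq, Submodule.span_le]
  rintro _ ⟨i, rfl⟩
  have hb : b i = LinearMap.proj i := by
    ext
    simp [b]
  rw [SetLike.mem_coe, hb]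
  exact proj_mem_range_epsilonMap i

lemma dualMap_comp_epsilonMap_comp_map (A : Matrix (Fin (n + 1)) (Fin (n + 1)) R) :
    (toLin' A).dualMap ∘ₗ epsilonMap R n ∘ₗ exteriorPower.map n (toLin' A) =
      A.det • epsilonMap R n := by
  refine exteriorPower.linearMap_ext (AlternatingMap.ext fun v => LinearMap.ext fun w => ?_)
  simp [epsilonForm_mulVec, Function.comp_def]

lemma epsilonMap_map_toLin'_of_det_eq_one {A : Matrix (Fin (n + 1)) (Fin (n + 1)) R}
    (hA : A.det = 1) (x : ⋀[R]^n (Fin (n + 1) → R)) :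
    epsilonMap R n (exteriorPower.map n (toLin' A) x) = epsilonMap R n x ∘ₗ toLin' A⁻¹ := by
  have h := LinearMap.congr_fun (dualMap_comp_epsilonMap_comp_map A) x
  calc epsilonMap R n (exteriorPower.map n (toLin' A) x)
      = epsilonMap R n (exteriorPower.map n (toLin' A) x) ∘ₗ toLin' A ∘ₗ toLin' A⁻¹ := by
        rw [← toLin'_mul, mul_nonsing_inv _ (by simp [hA]), toLin'_one, LinearMap.comp_id]
    _ = epsilonMap R n x ∘ₗ toLin' A⁻¹ := by
        rw [← LinearMap.comp_assoc]
        simpa [hA, LinearMap.dualMap_apply'] using congrArg (· ∘ₗ toLin' A⁻¹) h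

end CommRing

section Field

variable {K : Type*} [Field K] {n : ℕ}

lemma epsilonMap_bijective : Function.Bijective (epsilonMap K n) := by
  have hrank : finrank K (⋀[K]^n (Fin (n + 1) → K)) = finrank K (Dual K (Fin (n + 1) → K)) := by
    rw [exteriorPower.finrank_eq, Subspace.dual_finrank_eq, Module.finrank_fin_fun,
      Nat.choose_succ_self_right]
  exact ⟨(LinearMap.injective_iff_surjective_of_finrank_eq_finrank hrank).mpr
    epsilonMap_surjective, epsilonMap_surjective⟩

variable (K n) in
noncomputable def epsilonEquiv : ⋀[K]^n (Fin (n + 1) → K) ≃ₗ[K] Dual K (Fin (n + 1) → K) :=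
  LinearEquiv.ofBijective (epsilonMap K n) epsilonMap_bijective

end Field

end Matrix

/-- The `ε`-tensor provides an `SU(N)`-equivariant linear isomorphism between the `(N-1)`-st
exterior power of the fundamental representation and the antifundamental (dual)
representation: `φ (v₀ ∧ ⋯ ∧ v_{N-2}) w = det (v₀ | ⋯ | v_{N-2} | w)`, and `φ` intertwines
the induced action on `⋀^{N-1} V` with the contragredient action `g ↦ g ∘ₗ toLin' (U⁻¹)`. -/
theorem epsilon_equivariant_iso (N : ℕ) (hN : 0 < N) :
    ∃ φ : (⋀[ℂ]^(N - 1) (Fin N → ℂ)) ≃ₗ[ℂ] Module.Dual ℂ (Fin N → ℂ),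
      (∀ (v : Fin (N - 1) → (Fin N → ℂ)) (w : Fin N → ℂ),
        φ (wedge (N - 1) v) w =
          (Matrix.of fun (i : Fin N) (j : Fin N) =>
            if h : (j : ℕ) < N - 1 then v ⟨j, h⟩ i else w i).det) ∧
      ∀ U : Matrix.specialUnitaryGroup (Fin N) ℂ,
        ∃ h : ∀ x ∈ ⋀[ℂ]^(N - 1) (Fin N → ℂ),
          (ExteriorAlgebra.map
            (Matrix.toLin' (U : Matrix (Fin N) (Fin N) ℂ))).toLinearMap x
              ∈ ⋀[ℂ]^(N - 1) (Fin N → ℂ),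
          ∀ x : ⋀[ℂ]^(N - 1) (Fin N → ℂ),
            φ (((ExteriorAlgebra.map
                (Matrix.toLin' (U : Matrix (Fin N) (Fin N) ℂ))).toLinearMap.restrict h) x)
              = (φ x) ∘ₗ Matrix.toLin' ((U : Matrix (Fin N) (Fin N) ℂ)⁻¹) := by
  obtain ⟨n, rfl⟩ : ∃ n, N = n + 1 := ⟨N - 1, (Nat.succ_pred_eq_of_pos hN).symm⟩
  refine ⟨epsilonEquiv ℂ n, fun v w => ?_,
    fun U => ⟨fun _ hx => ExteriorAlgebra.exteriorPower_le_comap_map _ hx, fun x => ?_⟩⟩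
  · change epsilonMap ℂ n (exteriorPower.ιMulti ℂ n v) w = _
    rw [epsilonMap_ιMulti, epsilonForm_apply, ← det_transpose]
    congr 1
    ext i j
    simp only [transpose_apply, of_apply, Fin.snoc]
    split_ifs <;> first | rfl | omega
  · rw [ExteriorAlgebra.restrict_map_eq_exteriorPower_map]
    exact epsilonMap_map_toLin'_of_det_eq_one (mem_specialUnitaryGroup_iff.mp U.2).2 x
end

section
/- Let W be the ℂ-submodule of Matrix (Fin N) (Fin N) ℂ consisting of antisymmetric matrices, i.e. those A with Aᵀ = −A. Then: (i) W has finite rank N(N−1)/2; and (ii) for every U ∈ SU(N), the map A ↦ (U : Matrix (Fin N) (Fin N) ℂ) * A * (U : Matrix (Fin N) (Fin N) ℂ)ᵀ sends W into W, and the induced ℂ-linear endomorphism of W has determinant (LinearMap.det) equal to 1. (Hence the two-index antisymmetric representation of SU(N) again has determinant one, so its totally antisymmetric top power furnishes a singlet, as used in the alternative large-N extrapolation of baryons.) -/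
open Matrix

/-- The submodule of antisymmetric `N × N` complex matrices (`Aᵀ = -A`). -/
noncomputable def antisymMat (N : ℕ) : Submodule ℂ (Matrix (Fin N) (Fin N) ℂ) where
  carrier := {A | Aᵀ = -A}
  zero_mem' := by simp
  add_mem' := by
    intro A B hA hB
    simp only [Set.mem_setOf_eq] at *
    rw [Matrix.transpose_add, hA, hB, neg_add]
  smul_mem' := by
    intro c A hA
    simp only [Set.mem_setOf_eq] at *
    rw [Matrix.transpose_smul, hA, smul_neg]

/-- The linear map `A ↦ U * A * Uᵀ` on matrices. -/
noncomputable def conjT (N : ℕ) (U : Matrix (Fin N) (Fin N) ℂ) :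
    Matrix (Fin N) (Fin N) ℂ →ₗ[ℂ] Matrix (Fin N) (Fin N) ℂ :=
  (LinearMap.mulLeft ℂ U) ∘ₗ (LinearMap.mulRight ℂ Uᵀ)

/-!
The map `U ↦ det (A ↦ U A Uᵀ on antisymmetric matrices)` is multiplicative, so it is a monoid
hom from matrices to `ℂ`. Any such hom kills transvections: conjugating a transvection by a
diagonal matrix rescales its coefficient, which forces its image `x` to satisfy `x² = x` while
being invertible. Since every matrix is a product of transvections and a diagonal matrix, the hom
is determined by its values on diagonal matrices. A diagonal `diag d` acts on the basis of
elementary antisymmetric matrices indexed by pairs `i < j` by `d i * d j`, so the determinant is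
`det U ^ (N - 1)`, which is `1` on `SU(N)`.
-/

abbrev LtPair (ι : Type*) [LT ι] := {p : ι × ι // p.1 < p.2}

section LtPair

open Finset

variable {ι : Type*} [Fintype ι] [LinearOrder ι]

theorem card_ltPair : Fintype.card (LtPair ι) = (Fintype.card ι).choose 2 := by
  rw [Fintype.card_subtype, ← card_univ, ← card_product_filter_lt, univ_product_univ]

theorem prod_ltPair_mul {M : Type*} [CommMonoid M] (d : ι → M) :
    ∏ p : LtPair ι, d p.1.1 * d p.1.2 = (∏ i, d i) ^ (Fintype.card ι - 1) := by
  calc ∏ p : LtPair ι, d p.1.1 * d p.1.2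
      = ∏ i, ∏ j, if i < j then d i * d j else 1 := by
        rw [← Fintype.prod_prod_type (f := fun p => if p.1 < p.2 then d p.1 * d p.2 else 1),
          ← prod_filter]
        exact (prod_subtype _ (fun _ => by simp) fun p : ι × ι => d p.1 * d p.2).symm
    _ = (∏ i, ∏ j, if i < j then d i else 1) * ∏ i, ∏ j, if i < j then d j else 1 := by
        simp_rw [← prod_mul_distrib, ite_mul_one]
    _ = (∏ i, ∏ j, if i < j then d i else 1) * ∏ i, ∏ j, if j < i then d i else 1 := by
        rw [prod_comm (f := fun i j => if i < j then d j else 1)]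
    _ = ∏ i, ∏ j, if j ≠ i then d i else 1 := by
        simp_rw [← prod_mul_distrib]
        refine prod_congr rfl fun i _ => prod_congr rfl fun j _ => ?_
        rcases lt_trichotomy i j with h | rfl | h
        · simp [h, h.not_gt, h.ne']
        · simp
        · simp [h, h.not_gt, h.ne]
    _ = ∏ i, d i ^ (Fintype.card ι - 1) := by
        refine prod_congr rfl fun i _ => ?_
        rw [← prod_filter, filter_ne', prod_const, card_erase_of_mem (mem_univ i), card_univ]
    _ = _ := prod_pow _ _ _

end LtPair

section Transvection

variable {n K M : Type*} [Fintype n] [DecidableEq n] [Field K] [CommMonoid M]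

theorem diagonal_mulSingle_mul_transvection_mul_diagonal {i j : n} (hij : i ≠ j) {a : K}
    (ha : a ≠ 0) (c : K) :
    diagonal (Pi.mulSingle i a) * transvection i j c * diagonal (Pi.mulSingle i a⁻¹)
      = transvection i j (a * c) := by
  ext x y
  rw [mul_diagonal, diagonal_mul]
  simp only [transvection, Matrix.add_apply, Matrix.one_apply, Matrix.single_apply,
    Pi.mulSingle_apply]
  split_ifs <;> grind

theorem MonoidHom.map_transvection_eq_one [NeZero (2 : K)] (f : Matrix n n K →* M) {i j : n}
    (hij : i ≠ j) (c : K) : f (transvection i j c) = 1 := by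
  have map_scale (a : K) (ha : a ≠ 0) :
      f (transvection i j (a * c)) = f (transvection i j c) := by
    have hdiag : f (diagonal (Pi.mulSingle i a)) * f (diagonal (Pi.mulSingle i a⁻¹)) = 1 := by
      rw [← map_mul, diagonal_mul_diagonal, ← Pi.mul_def, ← Pi.mulSingle_mul,
        mul_inv_cancel₀ ha, Pi.mulSingle_one]
      exact map_one f
    rw [← diagonal_mulSingle_mul_transvection_mul_diagonal hij ha, map_mul, map_mul,
      mul_right_comm, hdiag, one_mul]
  have hinv : f (transvection i j c) * f (transvection i j (-c)) = 1 := by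
    rw [← map_mul, transvection_mul_transvection_same _ _ hij, add_neg_cancel, transvection_zero,
      map_one]
  have hidem : f (transvection i j c) * f (transvection i j c) = f (transvection i j c) := by
    rw [← map_mul, transvection_mul_transvection_same _ _ hij, ← two_mul,
      map_scale 2 two_ne_zero]
  calc f (transvection i j c)
      = f (transvection i j c) * f (transvection i j c) * f (transvection i j (-c)) := by
        rw [mul_assoc, hinv, mul_one]
    _ = 1 := by rw [hidem, hinv]

theorem MonoidHom.eq_of_map_diagonal_eq [NeZero (2 : K)] {f g : Matrix n n K →* M}
    (h : ∀ d, f (diagonal d) = g (diagonal d)) : f = g := by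
  ext A
  induction A using diagonal_transvection_induction with
  | hdiag d _ => exact h d
  | htransvec t =>
    exact (f.map_transvection_eq_one t.hij _).trans (g.map_transvection_eq_one t.hij _).symm
  | hmul A B hA hB => rw [map_mul, map_mul, hA, hB]

end Transvection

variable {N : ℕ}

theorem conjT_apply (U A : Matrix (Fin N) (Fin N) ℂ) : conjT N U A = U * A * Uᵀ := by
  simp [conjT, Matrix.mul_assoc]

theorem conjT_mem_antisymMat (U : Matrix (Fin N) (Fin N) ℂ) :
    ∀ A ∈ antisymMat N, conjT N U A ∈ antisymMat N := by
  intro A (hA : Aᵀ = -A)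
  change (conjT N U A)ᵀ = -conjT N U A
  rw [conjT_apply, transpose_mul, transpose_mul, transpose_transpose, hA, Matrix.neg_mul,
    Matrix.mul_neg, Matrix.mul_assoc]

variable (N) in
noncomputable def antisymRep : Matrix (Fin N) (Fin N) ℂ →* Module.End ℂ (antisymMat N) where
  toFun U := (conjT N U).restrict (conjT_mem_antisymMat U)
  map_one' := by ext; simp [conjT_apply]
  map_mul' U V := by ext; simp [conjT_apply, transpose_mul, Matrix.mul_assoc]

theorem coe_antisymRep_apply (U : Matrix (Fin N) (Fin N) ℂ) (A : antisymMat N) :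
    (antisymRep N U A : Matrix (Fin N) (Fin N) ℂ) = U * A * Uᵀ :=
  conjT_apply U A

def antisymOfUpper (f : LtPair (Fin N) → ℂ) : Matrix (Fin N) (Fin N) ℂ :=
  of fun i j => if h : i < j then f ⟨(i, j), h⟩ else if h : j < i then -f ⟨(j, i), h⟩ else 0

theorem antisymOfUpper_mem (f : LtPair (Fin N) → ℂ) : antisymOfUpper f ∈ antisymMat N := by
  change (antisymOfUpper f)ᵀ = -antisymOfUpper f
  ext i j
  simp only [transpose_apply, antisymOfUpper, of_apply]
  rcases lt_trichotomy i j with h | rfl | h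
  · simp [h, h.not_gt]
  · simp
  · simp [h, h.not_gt]

variable (N) in
noncomputable def antisymMatEquiv : antisymMat N ≃ₗ[ℂ] (LtPair (Fin N) → ℂ) where
  toFun A p := (A : Matrix (Fin N) (Fin N) ℂ) p.1.1 p.1.2
  map_add' _ _ := rfl
  map_smul' _ _ := rfl
  invFun f := ⟨antisymOfUpper f, antisymOfUpper_mem f⟩
  left_inv := by
    rintro ⟨A, hA : Aᵀ = -A⟩
    ext i j
    have hji : A j i = -A i j := congr_fun₂ hA i j
    simp only [antisymOfUpper, of_apply]
    rcases lt_trichotomy i j with h | rfl | h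
    · simp [h]
    · simp [self_eq_neg.mp hji]
    · simp [h, h.not_gt, hji]
  right_inv f := by
    ext ⟨⟨i, j⟩, h⟩
    simp [antisymOfUpper, h]

theorem antisymMatEquiv_apply (A : antisymMat N) (p : LtPair (Fin N)) :
    antisymMatEquiv N A p = (A : Matrix (Fin N) (Fin N) ℂ) p.1.1 p.1.2 :=
  rfl

theorem antisymMatEquiv_antisymRep_diagonal (d : Fin N → ℂ) (A : antisymMat N)
    (p : LtPair (Fin N)) :
    antisymMatEquiv N (antisymRep N (diagonal d) A) p
      = d p.1.1 * d p.1.2 * antisymMatEquiv N A p := by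
  simp only [antisymMatEquiv_apply, coe_antisymRep_apply, diagonal_transpose, mul_diagonal,
    diagonal_mul]
  ring

theorem finrank_antisymMat : Module.finrank ℂ (antisymMat N) = N * (N - 1) / 2 := by
  rw [(antisymMatEquiv N).finrank_eq, Module.finrank_fintype_fun_eq_card, card_ltPair,
    Fintype.card_fin, Nat.choose_two_right]

theorem det_antisymRep_diagonal (d : Fin N → ℂ) :
    LinearMap.det (antisymRep N (diagonal d)) = (∏ i, d i) ^ (N - 1) := by
  let b := Module.Basis.ofEquivFun (antisymMatEquiv N)
  have hdiag : LinearMap.toMatrix b b (antisymRep N (diagonal d))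
      = diagonal fun p : LtPair (Fin N) => d p.1.1 * d p.1.2 := by
    ext p q
    simp [LinearMap.toMatrix_apply, b, antisymMatEquiv_antisymRep_diagonal, Pi.single_apply,
      diagonal_apply]
  rw [← LinearMap.det_toMatrix b, hdiag, det_diagonal, prod_ltPair_mul, Fintype.card_fin]

theorem det_antisymRep (U : Matrix (Fin N) (Fin N) ℂ) :
    LinearMap.det (antisymRep N U) = U.det ^ (N - 1) := by
  have : LinearMap.det.comp (antisymRep N) = (powMonoidHom (N - 1)).comp detMonoidHom :=
    MonoidHom.eq_of_map_diagonal_eq fun d => by simp [det_antisymRep_diagonal, Finset.prod_pow]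
  exact DFunLike.congr_fun this U

theorem antisym_rep_det_one_general (N : ℕ) :
    Module.finrank ℂ (antisymMat N) = N * (N - 1) / 2 ∧
      ∀ U : Matrix.specialUnitaryGroup (Fin N) ℂ,
        ∃ h : ∀ x ∈ antisymMat N,
            conjT N (U : Matrix (Fin N) (Fin N) ℂ) x ∈ antisymMat N,
          LinearMap.det ((conjT N (U : Matrix (Fin N) (Fin N) ℂ)).restrict h) = 1 := by
  refine ⟨finrank_antisymMat, fun U => ⟨conjT_mem_antisymMat _, ?_⟩⟩
  change LinearMap.det (antisymRep N U) = 1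
  rw [det_antisymRep, (mem_specialUnitaryGroup_iff.mp U.2).2, one_pow]

/-- The two-index antisymmetric representation of `SU(N)`: the antisymmetric matrices form a
subspace of dimension `N(N-1)/2`, stable under `A ↦ U A Uᵀ`, and the induced endomorphism
has determinant one. -/
theorem antisym_rep_det_one (N : ℕ) (hN : 0 < N) :
    Module.finrank ℂ (antisymMat N) = N * (N - 1) / 2 ∧
      ∀ U : Matrix.specialUnitaryGroup (Fin N) ℂ,
        ∃ h : ∀ x ∈ antisymMat N,
            conjT N (U : Matrix (Fin N) (Fin N) ℂ) x ∈ antisymMat N,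
          LinearMap.det ((conjT N (U : Matrix (Fin N) (Fin N) ℂ)).restrict h) = 1 :=
  antisym_rep_det_one_general N
end
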